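/- arXiv:1911.07298 — 2 statements merged into one kernel-verified Lean document; each statement's English description precedes it below -/
import Mathlib

section
/- Let G be a finite directed graph that does not satisfy condition NC with parameter F, witnessed by a partition (L,C,R) with L−F and R−F nonempty, the in-neighborhood of L−F in R∪C of size ≤ f, and the in-neighborhood of R−F in L∪C of size ≤ f. Then for the partition A = L, B = R∪C: no vertex of L−F has f+1 pairwise internally-disjoint paths from B excluding F, and no vertex of R−F has f+1 pairwise internally-disjoint paths from A excluding F; hence G fails condition SC with parameter F. -/
open Set

variable {V : Type*}

/-- A (directed) path: nonempty list of distinct vertices with consecutive edges. -/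
def DiPath (E : V → V → Prop) (p : List V) : Prop :=
  p ≠ [] ∧ p.Nodup ∧ p.Chain' E

/-- A path excludes `F` if none of its internal vertices lies in `F`. -/
def Excludes (F : Set V) (p : List V) : Prop :=
  ∀ x ∈ p.tail.dropLast, x ∉ F

/-- A path from (a vertex of) `A` to `v`. -/
def PathFromTo (E : V → V → Prop) (A : Set V) (v : V) (p : List V) : Prop :=
  DiPath E p ∧ (∃ a ∈ A, p.head? = some a) ∧ p.getLast? = some v

/-- There exist `n` pairwise internally-disjoint `A`-`v` paths excluding `F`
(sharing only the terminal `v`). -/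
def DisjPaths (E : V → V → Prop) (F A : Set V) (v : V) (n : ℕ) : Prop :=
  ∃ P : Fin n → List V,
    (∀ i, PathFromTo E A v (P i) ∧ Excludes F (P i)) ∧
    (∀ i j, i ≠ j → ∀ x, x ∈ P i → x ∈ P j → x = v)

/-- `A` (f+1)-propagates to every vertex of `B` avoiding `F`. -/
def Propagates (E : V → V → Prop) (f : ℕ) (F A B : Set V) : Prop :=
  ∀ v ∈ B, DisjPaths E F A v (f + 1)

/-- Condition SC with parameter `F`. -/
def CondSC (E : V → V → Prop) (f : ℕ) (F : Set V) : Prop :=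
  ∀ A B : Set V, A ∪ B = Set.univ → A ∩ B = ∅ →
    (A \ F).Nonempty → (B \ F).Nonempty →
    Propagates E f F A (B \ F) ∨ Propagates E f F B (A \ F)

/-- Reachability within the vertex set `W`. -/
def ReachIn (E : V → V → Prop) (W : Set V) : V → V → Prop :=
  Relation.ReflTransGen (fun a b => a ∈ W ∧ b ∈ W ∧ E a b)

/-- `S` is a (maximal) strongly connected component of the induced subgraph on `W`. -/
def IsSCCIn (E : V → V → Prop) (W S : Set V) : Prop :=
  S.Nonempty ∧ S ⊆ W ∧ (∀ u ∈ S, ∀ v ∈ S, ReachIn E W u v) ∧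
  ∀ T, S ⊆ T → T ⊆ W → (∀ u ∈ T, ∀ v ∈ T, ReachIn E W u v) → T = S

/-- `S` is a source component of `G − F`: an SCC of the induced subgraph on `V − F`
receiving no edge from a vertex of `V − F` outside `S`. -/
def IsSourceComponent (E : V → V → Prop) (F S : Set V) : Prop :=
  IsSCCIn E (Set.univ \ F) S ∧ ∀ u, u ∉ F → u ∉ S → ∀ s ∈ S, ¬ E u s

/-- In-neighborhood of `T` contained in `B`. -/
def inNbr (E : V → V → Prop) (B T : Set V) : Set V :=
  {u ∈ B | ∃ v ∈ T, E u v}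

/-- `N(F→S)`: vertices of `F` with an edge into `S`. -/
def NFS (E : V → V → Prop) (F S : Set V) : Set V :=
  {w ∈ F | ∃ s ∈ S, E w s}

/-- Edge relation of the subgraph induced on `U`. -/
def inducedE (E : V → V → Prop) (U : Set V) : V → V → Prop :=
  fun a b => a ∈ U ∧ b ∈ U ∧ E a b

/-- Condition NC with parameter `F`. -/
def CondNC (E : V → V → Prop) (f : ℕ) (F : Set V) : Prop :=
  ∀ L C R : Set V, L ∪ C ∪ R = Set.univ →
    L ∩ C = ∅ → L ∩ R = ∅ → C ∩ R = ∅ →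
    (L \ F).Nonempty → (R \ F).Nonempty →
    f < (inNbr E (R ∪ C) (L \ F)).ncard ∨ f < (inNbr E (L ∪ C) (R \ F)).ncard

/-!
Put `S = R ∪ C` (for targets in `L − F`) or `S = L ∪ C` (for targets in `R − F`), and let
`D = Sᶜ − F`. A path starting in `S` and ending at a target in `D` must leave `S` along some
edge `u → v`; as its internal vertices avoid `F`, the vertex `v` lies in `D`, so `u` is an
in-neighbour of `D` in `S`. Paths that meet only at the target pick distinct such `u`, so there
are at most `f` of them, while condition SC would demand `f + 1` for the partition `(L, R ∪ C)`.
-/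

theorem List.IsChain.exists_rel_mem_notMem {r : V → V → Prop} {S : Set V} :
    ∀ {p : List V}, p.IsChain r → ∀ {a t : V}, p.head? = some a → a ∈ S →
      p.getLast? = some t → t ∉ S → ∃ u v, u ∈ S ∧ v ∉ S ∧ r u v ∧ u ∈ p ∧ v ∈ p.tail
  | [], _, _, _, ha, _, _, _ => by simp at ha
  | [a], _, _, _, ha, haS, ht, htS => by
    simp only [List.head?_cons, List.getLast?_singleton, Option.some.injEq] at ha ht
    exact absurd (ht ▸ ha ▸ haS) htS
  | a :: b :: p, hch, _, t, ha, haS, ht, htS => by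
    simp only [List.head?_cons, Option.some.injEq] at ha
    subst ha
    rw [List.isChain_cons_cons] at hch
    by_cases hbS : b ∈ S
    · obtain ⟨u, v, huS, hvS, huv, hu, hv⟩ :=
        hch.2.exists_rel_mem_notMem rfl hbS (by rwa [List.getLast?_cons_cons] at ht) htS
      exact ⟨u, v, huS, hvS, huv, List.mem_cons_of_mem _ hu, List.mem_of_mem_tail hv⟩
    · exact ⟨a, b, haS, hbS, hch.1, List.mem_cons_self, List.mem_cons_self⟩

theorem List.mem_tail_dropLast_or_eq_of_mem_tail {p : List V} {v t : V} (hv : v ∈ p.tail)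
    (ht : p.getLast? = some t) : v ∈ p.tail.dropLast ∨ v = t := by
  obtain _ | ⟨a, q⟩ := p
  · simp at hv
  · have hq : q ≠ [] := List.ne_nil_of_mem hv
    rw [List.getLast?_cons, List.getLast?_eq_some_getLast hq] at ht
    simp only [List.tail_cons, Option.getD_some, Option.some.injEq] at hv ht ⊢
    rw [← List.dropLast_append_getLast hq, ht] at hv
    simpa using hv

section Paths

variable {E : V → V → Prop} {F A S : Set V} {t : V}

theorem PathFromTo.exists_mem_inNbr {p : List V} (hp : PathFromTo E A t p)
    (hpF : Excludes F p) (hAS : A ⊆ S) (ht : t ∈ Sᶜ \ F) :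
    ∃ u ∈ p, u ∈ inNbr E S (Sᶜ \ F) := by
  obtain ⟨⟨-, -, hch⟩, ⟨a, haA, ha⟩, hlast⟩ := hp
  obtain ⟨u, v, huS, hvS, huv, hu, hv⟩ := hch.exists_rel_mem_notMem ha (hAS haA) hlast ht.1
  have hvD : v ∈ Sᶜ \ F := by
    rcases List.mem_tail_dropLast_or_eq_of_mem_tail hv hlast with hv | rfl
    · exact ⟨hvS, hpF v hv⟩
    · exact ht
  exact ⟨u, hu, huS, v, hvD, huv⟩

/-- Menger's inequality in its easy direction: the in-neighbourhood of `Sᶜ − F` in `S`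
separates `S` from any target in `Sᶜ − F`. -/
theorem not_disjPaths_of_ncard_inNbr_le [Finite V] {f : ℕ} (hAS : A ⊆ S) (ht : t ∈ Sᶜ \ F)
    (hsmall : (inNbr E S (Sᶜ \ F)).ncard ≤ f) : ¬ DisjPaths E F A t (f + 1) := by
  rintro ⟨P, hP, hdisj⟩
  choose g hgP hg using fun i => (hP i).1.exists_mem_inNbr (hP i).2 hAS ht
  have hinj : Function.Injective g := fun i j hij => by
    by_contra hne
    exact ht.1 (hdisj i j hne (g i) (hgP i) (hij ▸ hgP j) ▸ (hg i).1)
  have hrange : Set.range g ⊆ inNbr E S (Sᶜ \ F) := Set.range_subset_iff.2 hg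
  have := Set.ncard_le_ncard hrange (Set.toFinite _)
  rw [Set.ncard_range_of_injective hinj, Nat.card_eq_fintype_card, Fintype.card_fin] at this
  omega

end Paths

theorem not_condSC_of_not_disjPaths {E : V → V → Prop} {f : ℕ} {F A B : Set V}
    (hcompl : IsCompl A B) {a b : V} (ha : a ∈ A \ F) (hb : b ∈ B \ F)
    (hna : ¬ DisjPaths E F B a (f + 1)) (hnb : ¬ DisjPaths E F A b (f + 1)) :
    ¬ CondSC E f F := fun hSC => by
  rcases hSC A B (codisjoint_iff.1 hcompl.codisjoint)
      (disjoint_iff_inter_eq_empty.1 hcompl.disjoint) ⟨a, ha⟩ ⟨b, hb⟩ with h | h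
  · exact hnb (h b hb)
  · exact hna (h a ha)

theorem NC_failure_gives_SC_failure_general [Fintype V] (E : V → V → Prop) (f : ℕ)
    (F L C R : Set V)
    (hpart : L ∪ C ∪ R = Set.univ)
    (hLC : L ∩ C = ∅) (hLR : L ∩ R = ∅) (hCR : C ∩ R = ∅)
    (hL : (L \ F).Nonempty) (hR : (R \ F).Nonempty)
    (hsmall1 : (inNbr E (R ∪ C) (L \ F)).ncard ≤ f)
    (hsmall2 : (inNbr E (L ∪ C) (R \ F)).ncard ≤ f) :
    (∀ t ∈ L \ F, ¬ DisjPaths E F (R ∪ C) t (f + 1)) ∧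
    (∀ t ∈ R \ F, ¬ DisjPaths E F L t (f + 1)) ∧
    ¬ CondSC E f F := by
  have hcomplL : IsCompl L (R ∪ C) := by
    refine ⟨Set.disjoint_union_right.2 ⟨disjoint_iff_inter_eq_empty.2 hLR,
      disjoint_iff_inter_eq_empty.2 hLC⟩, codisjoint_iff.2 (?_ : _ ∪ _ = univ)⟩
    rw [← hpart, Set.union_comm R, ← Set.union_assoc]
  have hcomplR : IsCompl R (L ∪ C) := by
    refine ⟨Set.disjoint_union_right.2
      ⟨disjoint_iff_inter_eq_empty.2 (Set.inter_comm L R ▸ hLR),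
        disjoint_iff_inter_eq_empty.2 (Set.inter_comm C R ▸ hCR)⟩,
      codisjoint_iff.2 (?_ : _ ∪ _ = univ)⟩
    rw [← hpart, Set.union_comm]
  have hleft : ∀ t ∈ L \ F, ¬ DisjPaths E F (R ∪ C) t (f + 1) := by
    rw [← hcomplL.symm.compl_eq] at hsmall1 ⊢
    exact fun t ht => not_disjPaths_of_ncard_inNbr_le subset_rfl ht hsmall1
  have hright : ∀ t ∈ R \ F, ¬ DisjPaths E F L t (f + 1) := by
    rw [← hcomplR.symm.compl_eq] at hsmall2 ⊢
    exact fun t ht => not_disjPaths_of_ncard_inNbr_le Set.subset_union_left ht hsmall2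
  obtain ⟨a, ha⟩ := hL
  obtain ⟨b, hb⟩ := hR
  exact ⟨hleft, hright, not_condSC_of_not_disjPaths hcomplL ha ⟨Or.inl hb.1, hb.2⟩
    (hleft a ha) (hright b hb)⟩

/-- A witness to the failure of condition NC yields a failure of condition SC:
for `A = L`, `B = R ∪ C`, no vertex of `L − F` has `f+1` disjoint paths from `B`
excluding `F`, no vertex of `R − F` has `f+1` disjoint paths from `A` excluding `F`,
hence `G` fails condition SC with parameter `F`. -/
theorem NC_failure_gives_SC_failure [Fintype V] (E : V → V → Prop) (f : ℕ)
    (F L C R : Set V) (hF : F.ncard ≤ f)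
    (hpart : L ∪ C ∪ R = Set.univ)
    (hLC : L ∩ C = ∅) (hLR : L ∩ R = ∅) (hCR : C ∩ R = ∅)
    (hL : (L \ F).Nonempty) (hR : (R \ F).Nonempty)
    (hsmall1 : (inNbr E (R ∪ C) (L \ F)).ncard ≤ f)
    (hsmall2 : (inNbr E (L ∪ C) (R \ F)).ncard ≤ f) :
    (∀ t ∈ L \ F, ¬ DisjPaths E F (R ∪ C) t (f + 1)) ∧
    (∀ t ∈ R \ F, ¬ DisjPaths E F L t (f + 1)) ∧
    ¬ CondSC E f F :=
  NC_failure_gives_SC_failure_general E f F L C R hpart hLC hLR hCR hL hR hsmall1 hsmall2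
end

section
/- Let G be a finite directed graph satisfying condition SC (condition SC with parameter F for every F ⊆ V with |F| ≤ f), where 0 < f < |V|. Then for every F with |F| ≤ f, in the unique source component S of G−F together with its in-neighbors in F, for any partition of S ∪ N(F→S) into sets Z and N with Z−F and N−F both nonempty: if Z does not (f+1)-propagate to N−F avoiding F within G[S ∪ N(F→S)], then N does (f+1)-propagate to Z−F avoiding F within G[S ∪ N(F→S)]. -/
open Set

variable {V : Type*}

/-!
Extend the partition `(Z, N)` of `S ∪ N(F→S)` to the partition `(Z ∪ (S ∪ N(F→S))ᶜ, N)` of the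
whole vertex set and apply condition SC of `G` with parameter `F`. The resulting paths end in
`S` and have no internal vertex in `F`; since no vertex of `G − F` outside `S` has an edge
into `S`, such a path runs inside `S` except possibly for its first vertex, which lies in
`S ∪ N(F→S)`. So each path system of `G` is already one of `G[S ∪ N(F→S)]`.
-/

section Confinement

variable {E : V → V → Prop} {F S : Set V}

theorem forall_mem_of_isChain_of_getLast?_mem (hS : ∀ u, u ∉ F → u ∉ S → ∀ s ∈ S, ¬ E u s)
    {v : V} (hv : v ∈ S) :
    ∀ {l : List V}, l.IsChain E → l.getLast? = some v → (∀ x ∈ l.dropLast, x ∉ F) →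
      ∀ x ∈ l, x ∈ S
  | [], _, _, _ => by simp
  | [a], _, hlast, _ => by simp_all
  | a :: b :: t, hchain, hlast, hint => by
    rw [List.isChain_cons_cons] at hchain
    rw [List.dropLast_cons_cons, List.forall_mem_cons] at hint
    have htail : ∀ x ∈ b :: t, x ∈ S :=
      forall_mem_of_isChain_of_getLast?_mem hS hv hchain.2 (by simpa using hlast) hint.2
    have ha : a ∈ S := by_contra fun haS => hS a hint.1 haS b (htail b List.mem_cons_self) hchain.1
    exact List.forall_mem_cons.mpr ⟨ha, htail⟩

theorem mem_union_NFS_of_pathFromTo (hS : ∀ u, u ∉ F → u ∉ S → ∀ s ∈ S, ¬ E u s)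
    {A : Set V} {v : V} {p : List V} (hv : v ∈ S) (hp : PathFromTo E A v p)
    (hpF : Excludes F p) : ∀ x ∈ p, x ∈ S ∪ NFS E F S := by
  obtain ⟨⟨hne, -, hchain⟩, -, hlast⟩ := hp
  obtain ⟨a, l, rfl⟩ := List.exists_cons_of_ne_nil hne
  rcases l with _ | ⟨b, t⟩
  · simp_all
  replace hchain := List.isChain_cons_cons.mp hchain
  have htail : ∀ x ∈ b :: t, x ∈ S :=
    forall_mem_of_isChain_of_getLast?_mem hS hv hchain.2 (by simpa using hlast) hpF
  have hb : b ∈ S := htail b List.mem_cons_self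
  have ha : a ∈ S ∪ NFS E F S := by
    by_cases haF : a ∈ F
    · exact Or.inr ⟨haF, b, hb, hchain.1⟩
    · exact Or.inl (by_contra fun haS => hS a haF haS b hb hchain.1)
  exact List.forall_mem_cons.mpr ⟨ha, fun x hx => Or.inl (htail x hx)⟩

theorem union_NFS_diff_subset : (S ∪ NFS E F S) \ F ⊆ S := by
  rintro x ⟨hx | hx, hxF⟩
  exacts [hx, absurd hx.1 hxF]

end Confinement

section Induced

variable {E : V → V → Prop} {F U A A' : Set V} {v : V}

theorem DiPath.induced {p : List V} (hp : DiPath E p) (hU : ∀ x ∈ p, x ∈ U) :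
    DiPath (inducedE E U) p :=
  ⟨hp.1, hp.2.1, hp.2.2.imp_of_mem_imp fun a b ha hb hab => ⟨hU a ha, hU b hb, hab⟩⟩

theorem DisjPaths.induced {n : ℕ}
    (hU : ∀ p, PathFromTo E A v p → Excludes F p → ∀ x ∈ p, x ∈ U) (hA : A ∩ U ⊆ A')
    (h : DisjPaths E F A v n) : DisjPaths (inducedE E U) F A' v n := by
  obtain ⟨P, hP, hdisj⟩ := h
  refine ⟨P, fun i => ?_, hdisj⟩
  obtain ⟨hpath, hex⟩ := hP i
  have hPU := hU _ hpath hex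
  obtain ⟨hdi, ⟨a, ha, hhead⟩, hlast⟩ := hpath
  exact ⟨⟨hdi.induced hPU, ⟨a, hA ⟨ha, hPU a (List.mem_of_head? hhead)⟩, hhead⟩, hlast⟩, hex⟩

end Induced

theorem Propagates.mono_right {E : V → V → Prop} {f : ℕ} {F A B B' : Set V} (hB : B ⊆ B')
    (h : Propagates E f F A B') : Propagates E f F A B := fun v hv => h v (hB hv)

theorem Propagates.induced_source_component {E : V → V → Prop} {f : ℕ} {F S A A' B : Set V}
    (hS : ∀ u, u ∉ F → u ∉ S → ∀ s ∈ S, ¬ E u s) (hB : B ⊆ S)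
    (hA : A ∩ (S ∪ NFS E F S) ⊆ A') (h : Propagates E f F A B) :
    Propagates (inducedE E (S ∪ NFS E F S)) f F A' B := fun v hv =>
  (h v hv).induced (fun _ hp hpF => mem_union_NFS_of_pathFromTo hS (hB hv) hp hpF) hA

theorem dichotomy_in_source_component_general (E : V → V → Prop) (f : ℕ)
    (hSC : ∀ F : Set V, F.ncard ≤ f → CondSC E f F)
    (F S : Set V) (hF : F.ncard ≤ f)
    (hS : IsSourceComponent E F S)
    (Z N : Set V) (hpart : Z ∪ N = S ∪ NFS E F S) (hdisj : Z ∩ N = ∅)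
    (hZ : (Z \ F).Nonempty) (hN : (N \ F).Nonempty)
    (hnp : ¬ Propagates (inducedE E (S ∪ NFS E F S)) f F Z (N \ F)) :
    Propagates (inducedE E (S ∪ NFS E F S)) f F N (Z \ F) := by
  set U := S ∪ NFS E F S
  have hZU : Z ⊆ U := hpart ▸ subset_union_left
  have hNU : N ⊆ U := hpart ▸ subset_union_right
  have hcover : (Z ∪ Uᶜ) ∪ N = univ := by
    rw [union_right_comm, hpart, union_compl_self]
  have hdisj' : (Z ∪ Uᶜ) ∩ N = ∅ := by
    rw [union_inter_distrib_right, hdisj, empty_union, ← disjoint_iff_inter_eq_empty]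
    exact disjoint_compl_left.mono_right hNU
  have hZ' : ((Z ∪ Uᶜ) \ F).Nonempty := hZ.mono (sdiff_subset_sdiff_left subset_union_left)
  rcases hSC F hF (Z ∪ Uᶜ) N hcover hdisj' hZ' hN with hZN | hNZ
  · refine absurd (hZN.induced_source_component hS.2 ?_ ?_) hnp
    · exact (sdiff_subset_sdiff_left hNU).trans union_NFS_diff_subset
    · rintro x ⟨hx | hx, hxU⟩
      exacts [hx, absurd hxU hx]
  · refine (hNZ.mono_right ?_).induced_source_component hS.2 ?_ inter_subset_left
    · exact sdiff_subset_sdiff_left subset_union_left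
    · exact (sdiff_subset_sdiff_left hZU).trans union_NFS_diff_subset

/-- In the induced subgraph on `S ∪ N(F→S)`: if `Z` does not (f+1)-propagate to
`N − F` avoiding `F`, then `N` does (f+1)-propagate to `Z − F` avoiding `F`. -/
theorem dichotomy_in_source_component [Fintype V] (E : V → V → Prop) (f : ℕ)
    (hf0 : 0 < f) (hfn : f < Fintype.card V)
    (hSC : ∀ F : Set V, F.ncard ≤ f → CondSC E f F)
    (F S : Set V) (hF : F.ncard ≤ f)
    (hS : IsSourceComponent E F S)
    (hUniq : ∀ S', IsSourceComponent E F S' → S' = S)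
    (Z N : Set V) (hpart : Z ∪ N = S ∪ NFS E F S) (hdisj : Z ∩ N = ∅)
    (hZ : (Z \ F).Nonempty) (hN : (N \ F).Nonempty)
    (hnp : ¬ Propagates (inducedE E (S ∪ NFS E F S)) f F Z (N \ F)) :
    Propagates (inducedE E (S ∪ NFS E F S)) f F N (Z \ F) :=
  dichotomy_in_source_component_general E f hSC F S hF hS Z N hpart hdisj hZ hN hnp
end
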